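/- arXiv:1203.4809 — 7 statements merged into one kernel-verified Lean document; each statement's English description precedes it below -/
import Mathlib

section
/- Let F be a real orthogonal m×m matrix, A a real m×n matrix with rank(A) = n, and set M = FA. Let M = QR be a thin QR factorization with QᵀQ = Iₙ and R an invertible n×n upper triangular matrix. Let S be a real k×m matrix such that rank(SM) = n, and let SM = Q_s R_s be a thin QR factorization with Q_sᵀQ_s = Iₙ and R_s invertible. Then κ(A R_s⁻¹) = κ(S Q), i.e. (sup_{‖x‖₂=1} ‖A R_s⁻¹ x‖₂) / (inf_{‖x‖₂=1} ‖A R_s⁻¹ x‖₂) = (sup_{‖x‖₂=1} ‖S Q x‖₂) / (inf_{‖x‖₂=1} ‖S Q x‖₂). -/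
open Matrix

/-- The Euclidean two-norm of a vector in `ℝᵖ`. -/
noncomputable def euclNorm {p : ℕ} (v : Fin p → ℝ) : ℝ :=
  Real.sqrt (∑ i, v i ^ 2)

/-- `sup_{‖x‖₂=1} ‖X x‖₂` for a real `p × q` matrix `X`. -/
noncomputable def supOnSphere {p q : ℕ} (X : Matrix (Fin p) (Fin q) ℝ) : ℝ :=
  sSup {r | ∃ x : Fin q → ℝ, euclNorm x = 1 ∧ r = euclNorm (X.mulVec x)}

/-- `inf_{‖x‖₂=1} ‖X x‖₂` for a real `p × q` matrix `X`. -/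
noncomputable def infOnSphere {p q : ℕ} (X : Matrix (Fin p) (Fin q) ℝ) : ℝ :=
  sInf {r | ∃ x : Fin q → ℝ, euclNorm x = 1 ∧ r = euclNorm (X.mulVec x)}

/-- The two-norm condition number
`κ(X) = (sup_{‖x‖₂=1} ‖X x‖₂)/(inf_{‖x‖₂=1} ‖X x‖₂)`. -/
noncomputable def condNum {p q : ℕ} (X : Matrix (Fin p) (Fin q) ℝ) : ℝ :=
  supOnSphere X / infOnSphere X

/-!
If `Uᵀ U = 1` then `‖U y‖₂ = ‖y‖₂`, so `X` and `U X` take the same norms on the unit sphere and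
`κ(U X) = κ(X)`. If `T` is invertible, `x ↦ T x / ‖T x‖₂` is a bijection of the unit sphere with
`‖T⁻¹ (T x / ‖T x‖₂)‖₂ = ‖T x‖₂⁻¹`; this swaps extreme values and inverts them, so `κ(T⁻¹) = κ(T)`.
Since `A R_s⁻¹ = Fᵀ Q (R R_s⁻¹)` and `S Q = Q_s (R R_s⁻¹)⁻¹`, with `Fᵀ`, `Q`, `Q_s` having
orthonormal columns, both sides equal `κ(R R_s⁻¹)`.
-/

section EuclNorm

variable {p q : ℕ}

lemma euclNorm_eq_norm_toLp (v : Fin p → ℝ) : euclNorm v = ‖WithLp.toLp 2 v‖ := by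
  simp [euclNorm, EuclideanSpace.norm_eq, sq_abs]

lemma euclNorm_smul (c : ℝ) (v : Fin p → ℝ) : euclNorm (c • v) = |c| * euclNorm v := by
  rw [euclNorm_eq_norm_toLp, euclNorm_eq_norm_toLp, WithLp.toLp_smul, norm_smul,
    Real.norm_eq_abs]

lemma euclNorm_pos {v : Fin p → ℝ} (hv : v ≠ 0) : 0 < euclNorm v := by
  rw [euclNorm_eq_norm_toLp, norm_pos_iff]
  exact fun h => hv (by simpa using congrArg WithLp.ofLp h)

lemma euclNorm_mulVec_of_transpose_mul_self_eq_one {U : Matrix (Fin p) (Fin q) ℝ}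
    (hU : Uᵀ * U = 1) (y : Fin q → ℝ) : euclNorm (U *ᵥ y) = euclNorm y := by
  have sum_sq_eq_dotProduct : ∀ {r : ℕ} (w : Fin r → ℝ), ∑ i, w i ^ 2 = w ⬝ᵥ w := by
    intro r w; simp [dotProduct, sq]
  rw [euclNorm, euclNorm, sum_sq_eq_dotProduct, sum_sq_eq_dotProduct, dotProduct_mulVec,
    ← mulVec_transpose, mulVec_mulVec, hU, one_mulVec]

end EuclNorm

def normsOnSphere {p q : ℕ} (X : Matrix (Fin p) (Fin q) ℝ) : Set ℝ :=
  {r | ∃ x : Fin q → ℝ, euclNorm x = 1 ∧ r = euclNorm (X *ᵥ x)}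

section NormsOnSphere

variable {p p' q : ℕ}

lemma condNum_eq_sSup_div_sInf (X : Matrix (Fin p) (Fin q) ℝ) :
    condNum X = sSup (normsOnSphere X) / sInf (normsOnSphere X) := rfl

lemma normsOnSphere_eq_image (X : Matrix (Fin p) (Fin q) ℝ) :
    normsOnSphere X = (fun y : EuclideanSpace ℝ (Fin q) => euclNorm (X *ᵥ y.ofLp)) ''
      Metric.sphere 0 1 := by
  ext r
  constructor
  · rintro ⟨x, hx, rfl⟩
    exact ⟨WithLp.toLp 2 x, by rwa [mem_sphere_zero_iff_norm, ← euclNorm_eq_norm_toLp], rfl⟩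
  · rintro ⟨y, hy, rfl⟩
    rw [mem_sphere_zero_iff_norm, ← WithLp.toLp_ofLp 2 y, ← euclNorm_eq_norm_toLp] at hy
    exact ⟨y.ofLp, hy, rfl⟩

lemma isCompact_normsOnSphere (X : Matrix (Fin p) (Fin q) ℝ) :
    IsCompact (normsOnSphere X) := by
  rw [normsOnSphere_eq_image]
  refine (isCompact_sphere _ _).image ?_
  unfold euclNorm
  fun_prop

lemma normsOnSphere_nonempty (hq : 0 < q) (X : Matrix (Fin p) (Fin q) ℝ) :
    (normsOnSphere X).Nonempty := by
  rw [normsOnSphere_eq_image]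
  obtain ⟨i⟩ := Fin.pos_iff_nonempty.mp hq
  exact ⟨_, EuclideanSpace.single i 1, by simp, rfl⟩

lemma normsOnSphere_mul_of_transpose_mul_self_eq_one {U : Matrix (Fin p) (Fin q) ℝ}
    (hU : Uᵀ * U = 1) (X : Matrix (Fin q) (Fin p') ℝ) :
    normsOnSphere (U * X) = normsOnSphere X := by
  simp only [normsOnSphere, ← mulVec_mulVec, euclNorm_mulVec_of_transpose_mul_self_eq_one hU]

lemma condNum_mul_of_transpose_mul_self_eq_one {U : Matrix (Fin p) (Fin q) ℝ}
    (hU : Uᵀ * U = 1) (X : Matrix (Fin q) (Fin p') ℝ) :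
    condNum (U * X) = condNum X := by
  rw [condNum_eq_sSup_div_sInf, condNum_eq_sSup_div_sInf,
    normsOnSphere_mul_of_transpose_mul_self_eq_one hU]

end NormsOnSphere

section Inverse

variable {q : ℕ} {T : Matrix (Fin q) (Fin q) ℝ}

lemma pos_of_mem_normsOnSphere (hT : IsUnit T.det) {r : ℝ} (hr : r ∈ normsOnSphere T) :
    0 < r := by
  obtain ⟨x, hx, rfl⟩ := hr
  have hx0 : x ≠ 0 := by
    rintro rfl
    simp [euclNorm] at hx
  exact euclNorm_pos fun h => hx0 (mulVec_injective_iff_isUnit.mpr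
    ((isUnit_iff_isUnit_det T).mpr hT) (h.trans (mulVec_zero T).symm))

lemma inv_mem_normsOnSphere_nonsing_inv (hT : IsUnit T.det) {r : ℝ}
    (hr : r ∈ normsOnSphere T) : r⁻¹ ∈ normsOnSphere T⁻¹ := by
  have hr_pos := pos_of_mem_normsOnSphere hT hr
  obtain ⟨x, hx, rfl⟩ := hr
  refine ⟨(euclNorm (T *ᵥ x))⁻¹ • T *ᵥ x, ?_, ?_⟩
  · rw [euclNorm_smul, abs_of_pos (inv_pos.mpr hr_pos), inv_mul_cancel₀ hr_pos.ne']
  · rw [mulVec_smul, mulVec_mulVec, nonsing_inv_mul T hT, one_mulVec, euclNorm_smul,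
      abs_of_pos (inv_pos.mpr hr_pos), hx, mul_one]

lemma normsOnSphere_nonsing_inv (hT : IsUnit T.det) :
    normsOnSphere T⁻¹ = Inv.inv '' normsOnSphere T := by
  refine Set.Subset.antisymm (fun r hr => ⟨r⁻¹, ?_, inv_inv r⟩) ?_
  · simpa [nonsing_inv_nonsing_inv T hT] using
      inv_mem_normsOnSphere_nonsing_inv (isUnit_nonsing_inv_det T hT) hr
  · rintro _ ⟨r, hr, rfl⟩
    exact inv_mem_normsOnSphere_nonsing_inv hT hr

lemma condNum_nonsing_inv (hT : IsUnit T.det) : condNum T⁻¹ = condNum T := by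
  rcases Nat.eq_zero_or_pos q with rfl | hq
  · rw [Subsingleton.elim T⁻¹ T]
  obtain ⟨hmax_mem, hmax⟩ :=
    (isCompact_normsOnSphere T).isGreatest_sSup (normsOnSphere_nonempty hq T)
  obtain ⟨hmin_mem, hmin⟩ :=
    (isCompact_normsOnSphere T).isLeast_sInf (normsOnSphere_nonempty hq T)
  have hmin_pos := pos_of_mem_normsOnSphere hT hmin_mem
  have hgreatest : IsGreatest (normsOnSphere T⁻¹) (sInf (normsOnSphere T))⁻¹ := by
    rw [normsOnSphere_nonsing_inv hT]
    refine ⟨⟨_, hmin_mem, rfl⟩, ?_⟩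
    rintro _ ⟨s, hs, rfl⟩
    exact inv_anti₀ hmin_pos (hmin hs)
  have hleast : IsLeast (normsOnSphere T⁻¹) (sSup (normsOnSphere T))⁻¹ := by
    rw [normsOnSphere_nonsing_inv hT]
    refine ⟨⟨_, hmax_mem, rfl⟩, ?_⟩
    rintro _ ⟨s, hs, rfl⟩
    exact inv_anti₀ (pos_of_mem_normsOnSphere hT hs) (hmax hs)
  rw [condNum_eq_sSup_div_sInf, condNum_eq_sSup_div_sInf, hgreatest.csSup_eq,
    hleast.csInf_eq, inv_div_inv]

end Inverse

theorem condNum_preconditioned_eq_condNum_sampled_general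
    {m n k : ℕ}
    (F : Matrix (Fin m) (Fin m) ℝ) (hF : Fᵀ * F = 1)
    (A : Matrix (Fin m) (Fin n) ℝ)
    (Q : Matrix (Fin m) (Fin n) ℝ) (R : Matrix (Fin n) (Fin n) ℝ)
    (hQ : Qᵀ * Q = 1) (hRinv : IsUnit R.det)
    (hQR : F * A = Q * R)
    (S : Matrix (Fin k) (Fin m) ℝ)
    (Qs : Matrix (Fin k) (Fin n) ℝ) (Rs : Matrix (Fin n) (Fin n) ℝ)
    (hQs : Qsᵀ * Qs = 1) (hRsinv : IsUnit Rs.det)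
    (hQRs : S * (F * A) = Qs * Rs) :
    condNum (A * Rs⁻¹) = condNum (S * Q) := by
  have hFt : Fᵀᵀ * Fᵀ = 1 := by rw [transpose_transpose, mul_eq_one_comm.mp hF]
  have hA : A * Rs⁻¹ = Fᵀ * (Q * (R * Rs⁻¹)) := by
    rw [← Matrix.mul_assoc Q, ← hQR, ← Matrix.mul_assoc, ← Matrix.mul_assoc, hF, Matrix.one_mul]
  have hSQ : S * Q = Qs * (R * Rs⁻¹)⁻¹ := by
    rw [Matrix.mul_inv_rev, nonsing_inv_nonsing_inv Rs hRsinv, ← Matrix.mul_assoc, ← hQRs, hQR,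
      ← Matrix.mul_assoc, mul_nonsing_inv_cancel_right R _ hRinv]
  have hdet : IsUnit (R * Rs⁻¹).det := by
    rw [det_mul]
    exact hRinv.mul (isUnit_nonsing_inv_det Rs hRsinv)
  rw [hA, hSQ, condNum_mul_of_transpose_mul_self_eq_one hFt,
    condNum_mul_of_transpose_mul_self_eq_one hQ, condNum_mul_of_transpose_mul_self_eq_one hQs,
    condNum_nonsing_inv hdet]

/-- Let `F` be a real orthogonal `m×m` matrix, `A` a real `m×n` matrix of rank `n`, and
`M = FA` with thin QR factorization `M = QR` (`QᵀQ = Iₙ`, `R` invertible upper triangular).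
Let `S` be a real `k×m` matrix with `rank(SM) = n`, and `SM = Q_s R_s` a thin QR factorization
(`Q_sᵀQ_s = Iₙ`, `R_s` invertible upper triangular). Then `κ(A R_s⁻¹) = κ(S Q)`. -/
theorem condNum_preconditioned_eq_condNum_sampled
    {m n k : ℕ}
    (F : Matrix (Fin m) (Fin m) ℝ) (hF : Fᵀ * F = 1)
    (A : Matrix (Fin m) (Fin n) ℝ) (hA : A.rank = n)
    (Q : Matrix (Fin m) (Fin n) ℝ) (R : Matrix (Fin n) (Fin n) ℝ)
    (hQ : Qᵀ * Q = 1) (hRtri : R.BlockTriangular id) (hRinv : IsUnit R.det)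
    (hQR : F * A = Q * R)
    (S : Matrix (Fin k) (Fin m) ℝ) (hSM : (S * (F * A)).rank = n)
    (Qs : Matrix (Fin k) (Fin n) ℝ) (Rs : Matrix (Fin n) (Fin n) ℝ)
    (hQs : Qsᵀ * Qs = 1) (hRstri : Rs.BlockTriangular id) (hRsinv : IsUnit Rs.det)
    (hQRs : S * (F * A) = Qs * Rs) :
    condNum (A * Rs⁻¹) = condNum (S * Q) :=
  condNum_preconditioned_eq_condNum_sampled_general F hF A Q R hQ hRinv hQR S Qs Rs hQs hRsinv hQRs
end

section
/- For every real x with 0 < x < 1, f(−x) ≤ f(x), where f(x) = eˣ·(1+x)^{−(1+x)}; that is, e^{−x}·(1−x)^{−(1−x)} ≤ eˣ·(1+x)^{−(1+x)}, or equivalently (1+x)·ln(1+x) − (1−x)·ln(1−x) ≤ 2x. -/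
/-!
With `φ s = (1 + s) log (1 + s) - (1 - s) log (1 - s) - 2 s` we have `φ 0 = 0` and
`φ' s = log (1 + s) + log (1 - s) = log (1 - s²) ≤ 0` on `(-1, 1)`, so `φ x ≤ 0` for `0 ≤ x ≤ 1`.
Taking logarithms, `f (-x) ≤ f x` is the same inequality.
-/

open Real Set

noncomputable def mulLogDiff (s : ℝ) : ℝ :=
  (1 + s) * log (1 + s) - (1 - s) * log (1 - s) - 2 * s

lemma continuous_mulLogDiff : Continuous mulLogDiff := by
  unfold mulLogDiff
  have := continuous_mul_log
  fun_prop

lemma hasDerivAt_mulLogDiff {s : ℝ} (h₁ : 1 + s ≠ 0) (h₂ : 1 - s ≠ 0) :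
    HasDerivAt mulLogDiff (log (1 + s) + log (1 - s)) s := by
  have hp := (hasDerivAt_mul_log h₁).comp_const_add 1 s
  have hm := (hasDerivAt_mul_log h₂).comp_const_sub 1 s
  exact ((hp.sub hm).sub ((hasDerivAt_id' s).const_mul 2)).congr_deriv (by ring)

lemma antitoneOn_mulLogDiff : AntitoneOn mulLogDiff (Icc (-1) 1) := by
  apply antitoneOn_of_deriv_nonpos (convex_Icc _ _) continuous_mulLogDiff.continuousOn
  all_goals
    rw [interior_Icc]
    intro s ⟨hs₁, hs₂⟩
    have hd := hasDerivAt_mulLogDiff (s := s) (by linarith) (by linarith)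
  · exact hd.differentiableAt.differentiableWithinAt
  · rw [hd.deriv, ← log_mul (by linarith) (by linarith)]
    exact log_nonpos (by nlinarith) (by nlinarith [sq_nonneg s])

lemma mulLogDiff_nonpos {x : ℝ} (hx₀ : 0 ≤ x) (hx₁ : x ≤ 1) : mulLogDiff x ≤ 0 := by
  have h := antitoneOn_mulLogDiff (a := 0) ⟨by norm_num, by norm_num⟩ ⟨by linarith, hx₁⟩ hx₀
  simpa [mulLogDiff] using h

/-- For every real `0 < x < 1`, `f(−x) ≤ f(x)` where `f(x) = eˣ·(1+x)^{−(1+x)}`, i.e.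
`e^{−x}·(1−x)^{−(1−x)} ≤ eˣ·(1+x)^{−(1+x)}`; equivalently
`(1+x)·ln(1+x) − (1−x)·ln(1−x) ≤ 2x`. -/
theorem f_neg_le_f (x : ℝ) (hx0 : 0 < x) (hx1 : x < 1) :
    Real.exp (-x) * (1 - x) ^ (-(1 - x)) ≤ Real.exp x * (1 + x) ^ (-(1 + x)) ∧
      (1 + x) * Real.log (1 + x) - (1 - x) * Real.log (1 - x) ≤ 2 * x := by
  have key : (1 + x) * log (1 + x) - (1 - x) * log (1 - x) ≤ 2 * x := by
    have := mulLogDiff_nonpos hx0.le hx1.le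
    rw [mulLogDiff] at this
    linarith
  refine ⟨?_, key⟩
  rw [rpow_def_of_pos (by linarith), rpow_def_of_pos (by linarith), ← exp_add, ← exp_add,
    exp_le_exp]
  linarith
end

section
/- Let Q be a real m×n matrix with QᵀQ = Iₙ, leverage scores ℓⱼ = ‖eⱼᵀQ‖₂², coherence μ, and L = diag(ℓ₁,…,ℓ_m). Then μ² ≤ ‖QᵀLQ‖₂ ≤ μ. -/
/-! Write `‖v‖² = v ⬝ᵥ v` and `‖A‖ = spectralNorm' A`. Since `Qᵀ` is a contraction and
`0 ≤ ℓⱼ ≤ μ`, `‖Qᵀ L Q x‖ ≤ ‖L Q x‖ ≤ μ ‖Q x‖ = μ ‖x‖`. For the lower bound, evaluate the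
Rayleigh quotient bound `xᵀ A x ≤ ‖A‖ ‖x‖²` for `A = Qᵀ L Q` at the row `x = Qⱼ` of maximal
leverage `ℓⱼ = μ`: then `‖x‖² = μ` and `(Q x)ⱼ = ‖Qⱼ‖² = μ`, so
`μ³ = ℓⱼ (Q x)ⱼ² ≤ ∑ᵢ ℓᵢ (Q x)ᵢ² = xᵀ A x ≤ ‖A‖ μ`. -/

open Matrix

/-- The spectral (operator two-) norm of a real `p × q` matrix:
`sup_{‖x‖₂=1} ‖A x‖₂`. -/
noncomputable def spectralNorm' {p q : ℕ} (A : Matrix (Fin p) (Fin q) ℝ) : ℝ :=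
  sSup {r | ∃ x : Fin q → ℝ, ∑ i, x i ^ 2 = 1 ∧ r = Real.sqrt (∑ j, A.mulVec x j ^ 2)}

section DotProduct

variable {ι κ R : Type*} [Fintype ι] [Fintype κ]

section CommRing

variable [CommRing R]

lemma dotProduct_self_eq_sum_sq (v : ι → R) : v ⬝ᵥ v = ∑ i, v i ^ 2 := by
  simp only [dotProduct, sq]

lemma dotProduct_diagonal_mulVec_self [DecidableEq ι] (d v : ι → R) :
    v ⬝ᵥ diagonal d *ᵥ v = ∑ i, d i * v i ^ 2 := by
  simp only [dotProduct, mulVec_diagonal]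
  exact Finset.sum_congr rfl fun i _ => by ring

lemma mulVec_dotProduct_self_of_transpose_mul_self_eq_one [DecidableEq ι]
    {Q : Matrix κ ι R} (hQ : Qᵀ * Q = 1) (x : ι → R) :
    Q *ᵥ x ⬝ᵥ Q *ᵥ x = x ⬝ᵥ x := by
  rw [dotProduct_mulVec, ← mulVec_transpose, mulVec_mulVec, hQ, one_mulVec]

end CommRing

variable [CommRing R] [LinearOrder R] [IsStrictOrderedRing R]

lemma dotProduct_self_nonneg (v : ι → R) : 0 ≤ v ⬝ᵥ v := by
  rw [dotProduct_self_eq_sum_sq]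
  positivity

lemma dotProduct_sq_le (v w : ι → R) : (v ⬝ᵥ w) ^ 2 ≤ (v ⬝ᵥ v) * (w ⬝ᵥ w) := by
  rw [dotProduct_self_eq_sum_sq, dotProduct_self_eq_sum_sq]
  exact Finset.sum_mul_sq_le_sq_mul_sq Finset.univ v w

lemma mulVec_dotProduct_self_le_sum_mul (A : Matrix κ ι R) (x : ι → R) :
    A *ᵥ x ⬝ᵥ A *ᵥ x ≤ (∑ j, A j ⬝ᵥ A j) * (x ⬝ᵥ x) := by
  rw [dotProduct_self_eq_sum_sq, Finset.sum_mul]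
  exact Finset.sum_le_sum fun j _ => dotProduct_sq_le (A j) x

lemma diagonal_mulVec_dotProduct_self_le [DecidableEq ι] {d : ι → R} {c : R}
    (hd : ∀ i, |d i| ≤ c) (v : ι → R) :
    diagonal d *ᵥ v ⬝ᵥ diagonal d *ᵥ v ≤ c ^ 2 * (v ⬝ᵥ v) := by
  simp only [dotProduct_self_eq_sum_sq, mulVec_diagonal, Finset.mul_sum, mul_pow]
  exact Finset.sum_le_sum fun i _ => mul_le_mul_of_nonneg_right
    (sq_le_sq' (abs_le.mp (hd i)).1 (abs_le.mp (hd i)).2) (sq_nonneg _)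

lemma transpose_mulVec_dotProduct_self_le [DecidableEq ι] {Q : Matrix κ ι R}
    (hQ : Qᵀ * Q = 1) (y : κ → R) : Qᵀ *ᵥ y ⬝ᵥ Qᵀ *ᵥ y ≤ y ⬝ᵥ y := by
  set z := Qᵀ *ᵥ y
  have hz : z ⬝ᵥ z = Q *ᵥ z ⬝ᵥ y := by rw [dotProduct_mulVec, vecMul_transpose]
  have hcs := dotProduct_sq_le (Q *ᵥ z) y
  rw [← hz, mulVec_dotProduct_self_of_transpose_mul_self_eq_one hQ] at hcs
  nlinarith [dotProduct_self_nonneg z, dotProduct_self_nonneg y]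

end DotProduct

section SpectralNorm

variable {p q : ℕ} (A : Matrix (Fin p) (Fin q) ℝ)

lemma spectralNorm'_nonneg : 0 ≤ spectralNorm' A :=
  Real.sSup_nonneg fun _ ⟨_, _, hr⟩ => hr ▸ Real.sqrt_nonneg _

lemma spectralNorm'_le {c : ℝ} (hc : 0 ≤ c)
    (h : ∀ x, x ⬝ᵥ x = 1 → A *ᵥ x ⬝ᵥ A *ᵥ x ≤ c ^ 2) : spectralNorm' A ≤ c := by
  refine Real.sSup_le ?_ hc
  rintro _ ⟨x, hx, rfl⟩
  rw [← dotProduct_self_eq_sum_sq] at hx ⊢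
  exact (Real.sqrt_le_left hc).2 (h x hx)

lemma sqrt_mulVec_dotProduct_self_le_spectralNorm' {x : Fin q → ℝ} (hx : x ⬝ᵥ x = 1) :
    √(A *ᵥ x ⬝ᵥ A *ᵥ x) ≤ spectralNorm' A := by
  refine le_csSup ⟨√(∑ j, A j ⬝ᵥ A j), ?_⟩
    ⟨x, by rwa [← dotProduct_self_eq_sum_sq], by rw [dotProduct_self_eq_sum_sq]⟩
  rintro _ ⟨y, hy, rfl⟩
  rw [← dotProduct_self_eq_sum_sq] at hy ⊢
  gcongr
  simpa [hy] using mulVec_dotProduct_self_le_sum_mul A y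

lemma mulVec_dotProduct_self_le_spectralNorm'_sq_mul (x : Fin q → ℝ) :
    A *ᵥ x ⬝ᵥ A *ᵥ x ≤ spectralNorm' A ^ 2 * (x ⬝ᵥ x) := by
  rcases eq_or_ne x 0 with rfl | hx
  · simp
  set s := √(x ⬝ᵥ x)
  have hs2 : s ^ 2 = x ⬝ᵥ x := Real.sq_sqrt (dotProduct_self_nonneg x)
  have hs : 0 < s := Real.sqrt_pos.2 <|
    (dotProduct_self_nonneg x).lt_of_ne (Ne.symm (dotProduct_self_eq_zero.not.2 hx))
  have hunit : s⁻¹ • x ⬝ᵥ s⁻¹ • x = 1 := by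
    rw [smul_dotProduct, dotProduct_smul, smul_eq_mul, smul_eq_mul, ← hs2]
    field_simp
  have h := sqrt_mulVec_dotProduct_self_le_spectralNorm' A hunit
  rw [mulVec_smul, Real.sqrt_le_left (spectralNorm'_nonneg A), smul_dotProduct,
    dotProduct_smul, smul_eq_mul, smul_eq_mul, inv_mul_le_iff₀ hs, inv_mul_le_iff₀ hs] at h
  calc _ ≤ s * (s * spectralNorm' A ^ 2) := h
    _ = _ := by rw [← hs2]; ring

lemma dotProduct_mulVec_le_spectralNorm'_mul (A : Matrix (Fin q) (Fin q) ℝ) (x : Fin q → ℝ) :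
    x ⬝ᵥ A *ᵥ x ≤ spectralNorm' A * (x ⬝ᵥ x) := by
  refine (le_abs_self _).trans (abs_le_of_sq_le_sq ?_ ?_)
  · calc (x ⬝ᵥ A *ᵥ x) ^ 2
          ≤ (x ⬝ᵥ x) * (A *ᵥ x ⬝ᵥ A *ᵥ x) := dotProduct_sq_le _ _
      _ ≤ (x ⬝ᵥ x) * (spectralNorm' A ^ 2 * (x ⬝ᵥ x)) := by
        gcongr
        · exact dotProduct_self_nonneg x
        · exact mulVec_dotProduct_self_le_spectralNorm'_sq_mul A x
      _ = (spectralNorm' A * (x ⬝ᵥ x)) ^ 2 := by ring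
  · exact mul_nonneg (spectralNorm'_nonneg A) (dotProduct_self_nonneg x)

variable {m n : ℕ} {Q : Matrix (Fin m) (Fin n) ℝ} {d : Fin m → ℝ}

lemma spectralNorm'_transpose_mul_diagonal_mul_le (hQ : Qᵀ * Q = 1) {c : ℝ} (hc : 0 ≤ c)
    (hd : ∀ j, |d j| ≤ c) : spectralNorm' (Qᵀ * diagonal d * Q) ≤ c := by
  refine spectralNorm'_le _ hc fun x hx => ?_
  rw [← mulVec_mulVec, ← mulVec_mulVec]
  calc _ ≤ diagonal d *ᵥ Q *ᵥ x ⬝ᵥ diagonal d *ᵥ Q *ᵥ x :=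
        transpose_mulVec_dotProduct_self_le hQ _
    _ ≤ c ^ 2 * (Q *ᵥ x ⬝ᵥ Q *ᵥ x) := diagonal_mulVec_dotProduct_self_le hd _
    _ = c ^ 2 := by rw [mulVec_dotProduct_self_of_transpose_mul_self_eq_one hQ, hx, mul_one]

lemma mul_sq_le_spectralNorm'_transpose_mul_diagonal_mul (hd : ∀ i, 0 ≤ d i) (j : Fin m) :
    d j * (Q j ⬝ᵥ Q j) ^ 2 ≤ spectralNorm' (Qᵀ * diagonal d * Q) * (Q j ⬝ᵥ Q j) := by
  refine le_trans ?_ (dotProduct_mulVec_le_spectralNorm'_mul _ (Q j))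
  rw [← mulVec_mulVec, ← mulVec_mulVec, dotProduct_mulVec, vecMul_transpose,
    dotProduct_diagonal_mulVec_self]
  exact Finset.single_le_sum (f := fun i => d i * (Q *ᵥ Q j) i ^ 2)
    (fun i _ => mul_nonneg (hd i) (sq_nonneg _)) (Finset.mem_univ j)

end SpectralNorm

theorem sq_coherence_le_norm_QtLQ_le_coherence_general
    {m n : ℕ}
    (Q : Matrix (Fin m) (Fin n) ℝ) (hQ : Qᵀ * Q = 1)
    (ℓ : Fin m → ℝ) (hℓ : ∀ j, ℓ j = ∑ i, Q j i ^ 2)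
    (μ : ℝ) (hμ : IsGreatest (Set.range ℓ) μ) :
    μ ^ 2 ≤ spectralNorm' (Qᵀ * Matrix.diagonal ℓ * Q) ∧
      spectralNorm' (Qᵀ * Matrix.diagonal ℓ * Q) ≤ μ := by
  have hℓQ : ∀ j, ℓ j = Q j ⬝ᵥ Q j := fun j => by rw [hℓ, dotProduct_self_eq_sum_sq]
  have hℓ_nonneg : ∀ j, 0 ≤ ℓ j := fun j => hℓQ j ▸ dotProduct_self_nonneg (Q j)
  obtain ⟨⟨j₀, hj₀⟩, hμ_ge⟩ := hμ
  have hμ_nonneg : 0 ≤ μ := hj₀ ▸ hℓ_nonneg j₀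
  refine ⟨?_, spectralNorm'_transpose_mul_diagonal_mul_le hQ hμ_nonneg fun j =>
    abs_le.2 ⟨by linarith [hℓ_nonneg j], hμ_ge ⟨j, rfl⟩⟩⟩
  have h := mul_sq_le_spectralNorm'_transpose_mul_diagonal_mul (Q := Q) hℓ_nonneg j₀
  rw [← hℓQ j₀, hj₀] at h
  rcases hμ_nonneg.eq_or_lt with rfl | hμ_pos
  · simpa using spectralNorm'_nonneg (Qᵀ * diagonal ℓ * Q)
  · exact le_of_mul_le_mul_right (by linarith) hμ_pos

/-- If `Q` is a real `m×n` matrix with orthonormal columns, leverage scores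
`ℓⱼ = ‖eⱼᵀQ‖₂²`, coherence `μ`, and `L = diag(ℓ₁,…,ℓ_m)`, then `μ² ≤ ‖QᵀLQ‖₂ ≤ μ`. -/
theorem sq_coherence_le_norm_QtLQ_le_coherence
    {m n : ℕ} (hn : 1 ≤ n) (hnm : n ≤ m)
    (Q : Matrix (Fin m) (Fin n) ℝ) (hQ : Qᵀ * Q = 1)
    (ℓ : Fin m → ℝ) (hℓ : ∀ j, ℓ j = ∑ i, Q j i ^ 2)
    (μ : ℝ) (hμ : IsGreatest (Set.range ℓ) μ) :
    μ ^ 2 ≤ spectralNorm' (Qᵀ * Matrix.diagonal ℓ * Q) ∧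
      spectralNorm' (Qᵀ * Matrix.diagonal ℓ * Q) ≤ μ :=
  sq_coherence_le_norm_QtLQ_le_coherence_general Q hQ ℓ hℓ μ hμ
end

section
/- Let Q be a real m×n matrix with QᵀQ = Iₙ, leverage scores ℓⱼ = ‖eⱼᵀQ‖₂², coherence μ > 0, and L = diag(ℓ₁,…,ℓ_m). Let ℓ_[1] ≥ ℓ_[2] ≥ … ≥ ℓ_[m] denote the leverage scores arranged in non-increasing order, and set t = ⌊1/μ⌋; assume t < m. Then ‖QᵀLQ‖₂ ≤ μ·Σ_{j=1}^{t} ℓ_[j] + (1 − t·μ)·ℓ_[t+1] ≤ μ. If in addition 1/μ is an integer, then ‖QᵀLQ‖₂ ≤ μ·Σ_{j=1}^{t} ℓ_[j]. -/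
/-!
Write `L = DᵀD` with `D = diag(√ℓ)`, so that `QᵀLQ = RᵀR` for `R = DQ`. For a Gram matrix the
bound `‖R x‖² ≤ B ‖x‖²` already gives `‖RᵀR x‖ ≤ B ‖x‖` (Cauchy–Schwarz on `⟪R x, R RᵀR x⟫`), so
it suffices to bound the quadratic form `Σⱼ ℓⱼ (Q x)ⱼ²` for unit `x`. Its weights `qⱼ = (Q x)ⱼ²`
sum to `1` (orthonormal columns) and satisfy `qⱼ ≤ ℓⱼ ≤ μ` (Cauchy–Schwarz on the row), and
against such weights a non-increasing sequence is largest when the first `⌊1/μ⌋` weights equal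
`μ` and the rest of the mass sits on the next index.
-/

open Matrix

open Finset

theorem Fin.sum_ite_val_lt_const {m t : ℕ} (h : t ≤ m) (c : ℝ) :
    (∑ j : Fin m, if (j : ℕ) < t then c else 0) = t * c := by
  rw [Finset.sum_ite, sum_const_zero, add_zero, Finset.sum_const, nsmul_eq_mul,
    Fin.card_filter_val_lt, min_eq_right h]

theorem Antitone.sum_mul_le_of_weights_le {m t : ℕ} (htm : t < m) {a : Fin m → ℝ}
    (ha : Antitone a) {μ c : ℝ} {q : Fin m → ℝ} (hq0 : ∀ j, 0 ≤ q j) (hqμ : ∀ j, q j ≤ μ * c)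
    (hq : ∑ j, q j = c) :
    ∑ j, a j * q j ≤
      (μ * (∑ j : Fin m, if (j : ℕ) < t then a j else 0) + (1 - t * μ) * a ⟨t, htm⟩) * c := by
  set aₜ := a ⟨t, htm⟩
  -- `a j - aₜ` is `≥ 0` before index `t` and `≤ 0` from index `t` on
  have hterm : ∀ j : Fin m,
      (a j - aₜ) * q j ≤ if (j : ℕ) < t then (a j - aₜ) * (μ * c) else 0 := by
    intro j
    split_ifs with hj
    · exact mul_le_mul_of_nonneg_left (hqμ j) (sub_nonneg.2 (ha (Fin.mk_le_mk.2 hj.le)))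
    · exact mul_nonpos_of_nonpos_of_nonneg
        (sub_nonpos.2 (ha (Fin.mk_le_mk.2 (not_lt.1 hj)))) (hq0 j)
  have hsplit : ∀ j : Fin m, (if (j : ℕ) < t then (a j - aₜ) * (μ * c) else 0) =
      μ * c * (if (j : ℕ) < t then a j else 0) - (if (j : ℕ) < t then aₜ * (μ * c) else 0) :=
    fun j => by split_ifs <;> ring
  calc ∑ j, a j * q j = ∑ j, (a j - aₜ) * q j + aₜ * c := by
        rw [← hq, mul_sum, ← sum_add_distrib]
        exact sum_congr rfl fun j _ => by ring
    _ ≤ ∑ j : Fin m, (if (j : ℕ) < t then (a j - aₜ) * (μ * c) else 0) + aₜ * c := by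
        gcongr with j; exact hterm j
    _ = _ := by
        rw [sum_congr rfl fun j _ => hsplit j, sum_sub_distrib, ← mul_sum,
          Fin.sum_ite_val_lt_const htm.le]
        ring

theorem mul_sum_ite_val_lt_add_mem_Icc {m t : ℕ} (htm : t < m) {a : Fin m → ℝ} {μ : ℝ}
    (ha0 : ∀ j, 0 ≤ a j) (haμ : ∀ j, a j ≤ μ) (htμ : t * μ ≤ 1) :
    μ * (∑ j : Fin m, if (j : ℕ) < t then a j else 0) + (1 - t * μ) * a ⟨t, htm⟩ ∈
      Set.Icc 0 μ := by
  have hμ : 0 ≤ μ := (ha0 ⟨t, htm⟩).trans (haμ _)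
  have hsum0 : 0 ≤ ∑ j : Fin m, if (j : ℕ) < t then a j else 0 :=
    sum_nonneg fun j _ => by split_ifs; exacts [ha0 j, le_rfl]
  have hsum : (∑ j : Fin m, if (j : ℕ) < t then a j else 0) ≤ t * μ := by
    rw [← Fin.sum_ite_val_lt_const htm.le μ]
    gcongr with j
    split_ifs
    exacts [haμ j, le_rfl]
  have hlast0 : 0 ≤ (1 - t * μ) * a ⟨t, htm⟩ := mul_nonneg (sub_nonneg.2 htμ) (ha0 _)
  have hlast : (1 - t * μ) * a ⟨t, htm⟩ ≤ (1 - t * μ) * μ :=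
    mul_le_mul_of_nonneg_left (haμ _) (sub_nonneg.2 htμ)
  exact ⟨by positivity, by nlinarith [mul_le_mul_of_nonneg_left hsum hμ]⟩

section
variable {ι κ : Type*} [Fintype ι]

theorem Matrix.sum_mulVec_sq_of_transpose_mul_self [Fintype κ] [DecidableEq ι]
    {Q : Matrix κ ι ℝ} (hQ : Qᵀ * Q = 1) (x : ι → ℝ) :
    ∑ j, (Q *ᵥ x) j ^ 2 = ∑ i, x i ^ 2 := by
  have h : Q *ᵥ x ⬝ᵥ Q *ᵥ x = x ⬝ᵥ x := by
    rw [dotProduct_mulVec, ← mulVec_transpose, mulVec_mulVec, hQ, one_mulVec]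
  simpa only [dotProduct, sq] using h

theorem Matrix.mulVec_apply_sq_le (Q : Matrix κ ι ℝ) (x : ι → ℝ) (j : κ) :
    (Q *ᵥ x) j ^ 2 ≤ (∑ i, Q j i ^ 2) * ∑ i, x i ^ 2 :=
  sum_mul_sq_le_sq_mul_sq univ (Q j) x

theorem Matrix.sum_transpose_mul_self_mulVec_sq_le [Fintype κ] {R : Matrix κ ι ℝ} {B : ℝ}
    (hR : ∀ x, ∑ j, (R *ᵥ x) j ^ 2 ≤ B * ∑ i, x i ^ 2) (x : ι → ℝ) :
    ∑ i, ((Rᵀ * R) *ᵥ x) i ^ 2 ≤ B ^ 2 * ∑ i, x i ^ 2 := by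
  set y := (Rᵀ * R) *ᵥ x
  set s := ∑ i, y i ^ 2
  have hs : s = ∑ j, (R *ᵥ x) j * (R *ᵥ y) j := by
    have h : R *ᵥ x ⬝ᵥ R *ᵥ y = y ⬝ᵥ y := by
      rw [dotProduct_mulVec, ← mulVec_transpose, mulVec_mulVec]
    simpa only [s, dotProduct, sq] using h.symm
  have hs0 : 0 ≤ s := by positivity
  have hCS : s ^ 2 ≤ B * (∑ i, x i ^ 2) * (B * s) :=
    calc s ^ 2 ≤ (∑ j, (R *ᵥ x) j ^ 2) * ∑ j, (R *ᵥ y) j ^ 2 :=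
          hs ▸ sum_mul_sq_le_sq_mul_sq univ _ _
      _ ≤ B * (∑ i, x i ^ 2) * (B * s) :=
          mul_le_mul (hR x) (hR y) (by positivity) ((by positivity : (0 : ℝ) ≤ _).trans (hR x))
  rcases hs0.eq_or_lt with hs0 | hs0
  · rw [← hs0]; positivity
  · nlinarith

end

theorem spectralNorm'_le_of_sum_mulVec_sq_le {p q : ℕ} {A : Matrix (Fin p) (Fin q) ℝ} {B : ℝ}
    (hB : 0 ≤ B) (hA : ∀ x, ∑ j, (A *ᵥ x) j ^ 2 ≤ B ^ 2 * ∑ i, x i ^ 2) :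
    spectralNorm' A ≤ B := by
  refine Real.sSup_le ?_ hB
  rintro _ ⟨x, hx, rfl⟩
  exact (Real.sqrt_le_left hB).2 (by simpa only [hx, mul_one] using hA x)

theorem spectralNorm'_transpose_mul_diagonal_mul_le_s12 {p q : ℕ} {Q : Matrix (Fin p) (Fin q) ℝ}
    {d : Fin p → ℝ} (hd : ∀ j, 0 ≤ d j) {B : ℝ} (hB : 0 ≤ B)
    (hQ : ∀ x, ∑ j, d j * (Q *ᵥ x) j ^ 2 ≤ B * ∑ i, x i ^ 2) :
    spectralNorm' (Qᵀ * diagonal d * Q) ≤ B := by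
  set R := diagonal (fun j => √(d j)) * Q
  have hgram : Qᵀ * diagonal d * Q = Rᵀ * R := by
    rw [transpose_mul, diagonal_transpose, Matrix.mul_assoc, Matrix.mul_assoc,
      ← Matrix.mul_assoc (diagonal _), diagonal_mul_diagonal]
    simp only [Real.mul_self_sqrt (hd _)]
  have hR : ∀ x, ∑ j, (R *ᵥ x) j ^ 2 = ∑ j, d j * (Q *ᵥ x) j ^ 2 := fun x => by
    simp only [R, ← mulVec_mulVec, mulVec_diagonal, mul_pow, Real.sq_sqrt (hd _)]
  rw [hgram]
  exact spectralNorm'_le_of_sum_mulVec_sq_le hB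
    (sum_transpose_mul_self_mulVec_sq_le fun x => hR x ▸ hQ x)

theorem sum_leverage_mul_mulVec_sq_le {m n t : ℕ} (htm : t < m) {Q : Matrix (Fin m) (Fin n) ℝ}
    (hQ : Qᵀ * Q = 1) {ℓ : Fin m → ℝ} (hℓ : ∀ j, ℓ j = ∑ i, Q j i ^ 2) {μ : ℝ}
    (hℓμ : ∀ j, ℓ j ≤ μ) {ℓs : Fin m → ℝ} (hℓs : Antitone ℓs) {σ : Equiv.Perm (Fin m)}
    (hσ : ℓs = ℓ ∘ σ) (x : Fin n → ℝ) :
    ∑ j, ℓ j * (Q *ᵥ x) j ^ 2 ≤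
      (μ * (∑ j : Fin m, if (j : ℕ) < t then ℓs j else 0) + (1 - t * μ) * ℓs ⟨t, htm⟩) *
        ∑ i, x i ^ 2 := by
  have hweight : ∀ j, (Q *ᵥ x) j ^ 2 ≤ μ * ∑ i, x i ^ 2 := fun j =>
    (mulVec_apply_sq_le Q x j).trans
      (mul_le_mul_of_nonneg_right (hℓ j ▸ hℓμ j) (by positivity))
  have hmass : ∑ j, (Q *ᵥ x) (σ j) ^ 2 = ∑ i, x i ^ 2 := by
    rw [Equiv.sum_comp σ fun j => (Q *ᵥ x) j ^ 2, sum_mulVec_sq_of_transpose_mul_self hQ x]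
  rw [← Equiv.sum_comp σ]
  simpa only [hσ, Function.comp_apply] using
    hℓs.sum_mul_le_of_weights_le htm (fun j => sq_nonneg _) (fun j => hweight (σ j)) hmass

theorem norm_QtLQ_computable_bound_general
    {m n : ℕ}
    (Q : Matrix (Fin m) (Fin n) ℝ) (hQ : Qᵀ * Q = 1)
    (ℓ : Fin m → ℝ) (hℓ : ∀ j, ℓ j = ∑ i, Q j i ^ 2)
    (μ : ℝ) (hμ : IsGreatest (Set.range ℓ) μ) (hμ0 : 0 < μ)
    (ℓs : Fin m → ℝ) (hℓs : Antitone ℓs)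
    (hperm : ∃ σ : Equiv.Perm (Fin m), ℓs = ℓ ∘ σ)
    (t : ℕ) (ht : t = Nat.floor (1 / μ)) (htm : t < m) :
    spectralNorm' (Qᵀ * Matrix.diagonal ℓ * Q) ≤
        μ * (∑ j : Fin m, if (j : ℕ) < t then ℓs j else 0) + (1 - t * μ) * ℓs ⟨t, htm⟩ ∧
      μ * (∑ j : Fin m, if (j : ℕ) < t then ℓs j else 0) + (1 - t * μ) * ℓs ⟨t, htm⟩ ≤ μ ∧
      ((1 / μ : ℝ) = t →
        spectralNorm' (Qᵀ * Matrix.diagonal ℓ * Q) ≤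
          μ * (∑ j : Fin m, if (j : ℕ) < t then ℓs j else 0)) := by
  obtain ⟨σ, hσ⟩ := hperm
  have hℓ0 : ∀ j, 0 ≤ ℓ j := fun j => hℓ j ▸ by positivity
  have hℓμ : ∀ j, ℓ j ≤ μ := fun j => hμ.2 ⟨j, rfl⟩
  have htμ : t * μ ≤ 1 := (le_div_iff₀ hμ0).1 (ht ▸ Nat.floor_le (by positivity))
  obtain ⟨hbound0, hboundμ⟩ :=
    mul_sum_ite_val_lt_add_mem_Icc (a := ℓs) htm (fun j => hσ ▸ hℓ0 (σ j))
      (fun j => hσ ▸ hℓμ (σ j)) htμ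
  have hnorm := spectralNorm'_transpose_mul_diagonal_mul_le_s12 hℓ0 hbound0
    (sum_leverage_mul_mulVec_sq_le htm hQ hℓ hℓμ hℓs hσ)
  refine ⟨hnorm, hboundμ, fun hint => ?_⟩
  have htμ1 : t * μ = 1 := (eq_div_iff hμ0.ne').1 hint.symm
  simpa only [htμ1, sub_self, zero_mul, add_zero] using hnorm

/-- Computable bound on `‖QᵀLQ‖₂` from the largest leverage scores: with the leverage scores
`ℓ_[1] ≥ … ≥ ℓ_[m]` in non-increasing order and `t = ⌊1/μ⌋ < m`,
`‖QᵀLQ‖₂ ≤ μ·Σ_{j=1}^{t} ℓ_[j] + (1 − t·μ)·ℓ_[t+1] ≤ μ`, and if `1/μ` is an integer then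
`‖QᵀLQ‖₂ ≤ μ·Σ_{j=1}^{t} ℓ_[j]`. -/
theorem norm_QtLQ_computable_bound
    {m n : ℕ} (hn : 1 ≤ n) (hnm : n ≤ m)
    (Q : Matrix (Fin m) (Fin n) ℝ) (hQ : Qᵀ * Q = 1)
    (ℓ : Fin m → ℝ) (hℓ : ∀ j, ℓ j = ∑ i, Q j i ^ 2)
    (μ : ℝ) (hμ : IsGreatest (Set.range ℓ) μ) (hμ0 : 0 < μ)
    (ℓs : Fin m → ℝ) (hℓs : Antitone ℓs)
    (hperm : ∃ σ : Equiv.Perm (Fin m), ℓs = ℓ ∘ σ)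
    (t : ℕ) (ht : t = Nat.floor (1 / μ)) (htm : t < m) :
    spectralNorm' (Qᵀ * Matrix.diagonal ℓ * Q) ≤
        μ * (∑ j : Fin m, if (j : ℕ) < t then ℓs j else 0) + (1 - t * μ) * ℓs ⟨t, htm⟩ ∧
      μ * (∑ j : Fin m, if (j : ℕ) < t then ℓs j else 0) + (1 - t * μ) * ℓs ⟨t, htm⟩ ≤ μ ∧
      ((1 / μ : ℝ) = t →
        spectralNorm' (Qᵀ * Matrix.diagonal ℓ * Q) ≤
          μ * (∑ j : Fin m, if (j : ℕ) < t then ℓs j else 0)) :=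
  norm_QtLQ_computable_bound_general Q hQ ℓ hℓ μ hμ hμ0 ℓs hℓs hperm t ht htm
end

section
/- Let Z be a real m×n matrix with rank(Z) = n, smallest singular value σ_z = inf_{‖y‖₂=1} ‖Z y‖₂ > 0, and largest squared row norm μ_z = max_{1≤j≤m} ‖eⱼᵀZ‖₂². Let D = diag(d₁,…,d_m) be a non-negative m×m diagonal matrix, and let d_[1] ≥ d_[2] ≥ … ≥ d_[m] ≥ 0 denote its diagonal entries in non-increasing order. Set t = ⌊σ_z²/μ_z⌋ and assume t < m. Then: if ‖Z‖₂² − t·μ_z ≤ μ_z, one has ‖DZ‖₂² ≤ μ_z·Σ_{j=1}^{t} d_[j]² + (‖Z‖₂² − t·μ_z)·d_[t+1]²; and if ‖Z‖₂² − t·μ_z > μ_z, one has ‖DZ‖₂² ≤ μ_z·Σ_{j=2}^{t+1} d_[j]² + (‖Z‖₂² − t·μ_z)·d_[1]². -/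
/-!
For a unit vector `y` the numbers `b j = (Z y)_j²` satisfy `0 ≤ b j ≤ μ_z` and
`∑ b j ≤ ‖Z‖₂²`, while `‖D Z y‖₂² = ∑ d_j² b j`. Bounding this linear form on that polytope by
weak LP duality, with dual variable `d_[t+1]²` on the constraint `∑ b j ≤ ‖Z‖₂²`, gives the first
bound. The second follows from the first, since the difference of the two
right-hand sides is `(‖Z‖₂² - (t+1) μ_z) (d_[1]² - d_[t+1]²)`.
-/

open Matrix

open Finset

theorem sq_mulVec_apply_le {ι κ : Type*} [Fintype κ] (A : Matrix ι κ ℝ) (x : κ → ℝ) (j : ι) :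
    (A *ᵥ x) j ^ 2 ≤ (∑ i, A j i ^ 2) * ∑ i, x i ^ 2 :=
  sum_mul_sq_le_sq_mul_sq _ _ _

section SpectralNorm

variable {p q : ℕ} (A : Matrix (Fin p) (Fin q) ℝ)

theorem sum_sq_mulVec_le_spectralNorm'_sq {x : Fin q → ℝ} (hx : ∑ i, x i ^ 2 = 1) :
    ∑ j, (A *ᵥ x) j ^ 2 ≤ spectralNorm' A ^ 2 := by
  have hbdd : BddAbove {r | ∃ x : Fin q → ℝ, ∑ i, x i ^ 2 = 1 ∧
      r = √(∑ j, (A *ᵥ x) j ^ 2)} := by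
    refine ⟨√(∑ j, ∑ i, A j i ^ 2), ?_⟩
    rintro _ ⟨y, hy, rfl⟩
    refine Real.sqrt_le_sqrt (sum_le_sum fun j _ => ?_)
    simpa [hy] using sq_mulVec_apply_le A y j
  have hle : √(∑ j, (A *ᵥ x) j ^ 2) ≤ spectralNorm' A := le_csSup hbdd ⟨x, hx, rfl⟩
  calc ∑ j, (A *ᵥ x) j ^ 2 = √(∑ j, (A *ᵥ x) j ^ 2) ^ 2 :=
        (Real.sq_sqrt (sum_nonneg fun j _ => sq_nonneg _)).symm
    _ ≤ spectralNorm' A ^ 2 := by gcongr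

theorem spectralNorm'_sq_le {B : ℝ} (hB : 0 ≤ B)
    (h : ∀ x : Fin q → ℝ, ∑ i, x i ^ 2 = 1 → ∑ j, (A *ᵥ x) j ^ 2 ≤ B) :
    spectralNorm' A ^ 2 ≤ B := by
  have hnonneg : 0 ≤ spectralNorm' A :=
    Real.sSup_nonneg (by rintro _ ⟨x, -, rfl⟩; exact Real.sqrt_nonneg _)
  have hle : spectralNorm' A ≤ √B :=
    Real.sSup_le (by rintro _ ⟨x, hx, rfl⟩; exact Real.sqrt_le_sqrt (h x hx)) (Real.sqrt_nonneg _)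
  calc spectralNorm' A ^ 2 ≤ √B ^ 2 := by gcongr
    _ = B := Real.sq_sqrt hB

end SpectralNorm

theorem antitone_sq_of_nonneg {α : Type*} [Preorder α] {f : α → ℝ} (hf : Antitone f)
    (h0 : ∀ a, 0 ≤ f a) : Antitone fun a => f a ^ 2 :=
  fun _ b hab => pow_le_pow_left₀ (h0 b) (hf hab) 2

section SortedWeights

variable {m : ℕ} (t : ℕ) (htm : t < m)

theorem sum_mul_le_of_antitone {w b : Fin m → ℝ} {μ S : ℝ} (hw : Antitone w)
    (hwt : 0 ≤ w ⟨t, htm⟩) (hb0 : ∀ j, 0 ≤ b j) (hbμ : ∀ j, b j ≤ μ) (hbS : ∑ j, b j ≤ S) :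
    ∑ j, w j * b j ≤
      μ * (∑ j : Fin m, if (j : ℕ) < t then w j else 0) + (S - t * μ) * w ⟨t, htm⟩ := by
  set c := w ⟨t, htm⟩
  have hterm : ∀ j, (w j - c) * b j ≤ if (j : ℕ) < t then (w j - c) * μ else 0 := by
    intro j
    split_ifs with hj
    · exact mul_le_mul_of_nonneg_left (hbμ j) (sub_nonneg.2 (hw (Fin.le_def.2 hj.le)))
    · exact mul_nonpos_of_nonpos_of_nonneg
        (sub_nonpos.2 (hw (Fin.le_def.2 (not_lt.1 hj)))) (hb0 j)
  have hcount : ∑ j : Fin m, (if (j : ℕ) < t then (w j - c) * μ else 0) =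
      μ * (∑ j : Fin m, if (j : ℕ) < t then w j else 0) - t * μ * c := by
    simp only [← sum_filter, ← sum_mul, sum_sub_distrib, sum_const, Fin.card_filter_val_lt,
      min_eq_right htm.le, nsmul_eq_mul]
    ring
  calc ∑ j, w j * b j = ∑ j, (w j - c) * b j + c * ∑ j, b j := by
        rw [mul_sum, ← sum_add_distrib]
        exact sum_congr rfl fun j _ => by ring
    _ ≤ ∑ j : Fin m, (if (j : ℕ) < t then (w j - c) * μ else 0) + c * S :=
        add_le_add (sum_le_sum fun j _ => hterm j) (mul_le_mul_of_nonneg_left hbS hwt)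
    _ = μ * (∑ j : Fin m, if (j : ℕ) < t then w j else 0) + (S - t * μ) * c := by
        rw [hcount]; ring

theorem sum_lt_add_eq_sum_Icc_add (w : Fin m → ℝ) :
    (∑ j : Fin m, if (j : ℕ) < t then w j else 0) + w ⟨t, htm⟩ =
      (∑ j : Fin m, if 1 ≤ (j : ℕ) ∧ (j : ℕ) ≤ t then w j else 0) + w ⟨0, by omega⟩ := by
  rw [← Fintype.sum_ite_eq' ⟨t, htm⟩ w, ← Fintype.sum_ite_eq' ⟨0, by omega⟩ w,
    ← sum_add_distrib, ← sum_add_distrib]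
  refine sum_congr rfl fun j _ => ?_
  simp only [Fin.ext_iff]
  split_ifs <;> first | omega | ring

theorem mul_sum_lt_add_le_mul_sum_Icc_add {w : Fin m → ℝ} {μ S : ℝ} (hw : Antitone w)
    (h : μ < S - t * μ) :
    μ * (∑ j : Fin m, if (j : ℕ) < t then w j else 0) + (S - t * μ) * w ⟨t, htm⟩ ≤
      μ * (∑ j : Fin m, if 1 ≤ (j : ℕ) ∧ (j : ℕ) ≤ t then w j else 0) +
        (S - t * μ) * w ⟨0, by omega⟩ := by
  have hsum := sum_lt_add_eq_sum_Icc_add t htm w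
  have hprod : 0 ≤ (S - t * μ - μ) * (w ⟨0, by omega⟩ - w ⟨t, htm⟩) :=
    mul_nonneg (by linarith) (sub_nonneg.2 (hw (Fin.le_def.2 (Nat.zero_le t))))
  linear_combination hprod + μ * hsum

end SortedWeights

theorem spectralNorm'_diagonal_mul_sq_le {m n : ℕ} (Z : Matrix (Fin m) (Fin n) ℝ) {μ : ℝ}
    (hμ : ∀ j, ∑ i, Z j i ^ 2 ≤ μ) {d : Fin m → ℝ} (hd : ∀ j, 0 ≤ d j)
    (σ : Equiv.Perm (Fin m)) (hds : Antitone (d ∘ σ)) (t : ℕ) (htm : t < m) :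
    spectralNorm' (diagonal d * Z) ^ 2 ≤
      μ * (∑ j : Fin m, if (j : ℕ) < t then (d ∘ σ) j ^ 2 else 0) +
        (spectralNorm' Z ^ 2 - t * μ) * (d ∘ σ) ⟨t, htm⟩ ^ 2 := by
  have hw := antitone_sq_of_nonneg hds fun j => hd (σ j)
  have hwt : 0 ≤ (d ∘ σ) ⟨t, htm⟩ ^ 2 := sq_nonneg _
  have hμ0 : 0 ≤ μ := (sum_nonneg fun i _ => sq_nonneg _).trans (hμ ⟨0, by omega⟩)
  apply spectralNorm'_sq_le
  · simpa using sum_mul_le_of_antitone t htm hw hwt (b := 0) (fun _ => le_rfl) (fun _ => hμ0)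
      (by simpa using sq_nonneg (spectralNorm' Z))
  intro x hx
  have hrow : ∀ j, (Z *ᵥ x) j ^ 2 ≤ μ := fun j => by
    have hcs := sq_mulVec_apply_le Z x j
    rw [hx, mul_one] at hcs
    exact hcs.trans (hμ j)
  calc ∑ j, ((diagonal d * Z) *ᵥ x) j ^ 2 = ∑ j, (d ∘ σ) j ^ 2 * (Z *ᵥ x) (σ j) ^ 2 := by
        rw [← mulVec_mulVec, ← Equiv.sum_comp σ]
        simp [mulVec_diagonal, mul_pow]
    _ ≤ _ := sum_mul_le_of_antitone t htm hw hwt (fun j => sq_nonneg _) (fun j => hrow _)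
        (by rw [Equiv.sum_comp σ fun j => (Z *ᵥ x) j ^ 2]
            exact sum_sq_mulVec_le_spectralNorm'_sq Z hx)

theorem norm_diag_scaled_matrix_bound_general
    {m n : ℕ}
    (Z : Matrix (Fin m) (Fin n) ℝ)
    (μz : ℝ) (hμ : IsGreatest (Set.range fun j : Fin m => ∑ i, Z j i ^ 2) μz)
    (d : Fin m → ℝ) (hd : ∀ j, 0 ≤ d j)
    (ds : Fin m → ℝ) (hds : Antitone ds)
    (hperm : ∃ σ : Equiv.Perm (Fin m), ds = d ∘ σ)
    (t : ℕ) (htm : t < m) :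
    (spectralNorm' Z ^ 2 - t * μz ≤ μz →
      spectralNorm' (Matrix.diagonal d * Z) ^ 2 ≤
        μz * (∑ j : Fin m, if (j : ℕ) < t then ds j ^ 2 else 0) +
          (spectralNorm' Z ^ 2 - t * μz) * ds ⟨t, htm⟩ ^ 2) ∧
    (μz < spectralNorm' Z ^ 2 - t * μz →
      spectralNorm' (Matrix.diagonal d * Z) ^ 2 ≤
        μz * (∑ j : Fin m, if 1 ≤ (j : ℕ) ∧ (j : ℕ) ≤ t then ds j ^ 2 else 0) +
          (spectralNorm' Z ^ 2 - t * μz) *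
            ds ⟨0, Nat.lt_of_le_of_lt (Nat.zero_le t) htm⟩ ^ 2) := by
  obtain ⟨σ, rfl⟩ := hperm
  have hbound := spectralNorm'_diagonal_mul_sq_le Z (fun j => hμ.2 ⟨j, rfl⟩) hd σ hds t htm
  have hw := antitone_sq_of_nonneg hds fun j => hd (σ j)
  exact ⟨fun _ => hbound, fun h => hbound.trans (mul_sum_lt_add_le_mul_sum_Icc_add t htm hw h)⟩

/-- Two-norm bound for diagonally scaled matrices.  `Z` is a real `m×n` matrix with
`rank(Z) = n`, smallest singular value `σ_z = inf_{‖y‖₂=1} ‖Zy‖₂ > 0`, and largest squared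
row norm `μ_z`.  `D = diag(d₁,…,d_m)` is non-negative diagonal with entries sorted
non-increasingly as `d_[1] ≥ … ≥ d_[m] ≥ 0`, and `t = ⌊σ_z²/μ_z⌋ < m`.  Then
if `‖Z‖₂² − t·μ_z ≤ μ_z`,
`‖DZ‖₂² ≤ μ_z·Σ_{j=1}^{t} d_[j]² + (‖Z‖₂² − t·μ_z)·d_[t+1]²`, and
if `‖Z‖₂² − t·μ_z > μ_z`,
`‖DZ‖₂² ≤ μ_z·Σ_{j=2}^{t+1} d_[j]² + (‖Z‖₂² − t·μ_z)·d_[1]²`. -/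
theorem norm_diag_scaled_matrix_bound
    {m n : ℕ} (hn : 1 ≤ n)
    (Z : Matrix (Fin m) (Fin n) ℝ) (hrank : Z.rank = n)
    (σz : ℝ)
    (hσ : σz = sInf {r | ∃ y : Fin n → ℝ, ∑ i, y i ^ 2 = 1 ∧
      r = Real.sqrt (∑ j, Z.mulVec y j ^ 2)})
    (hσ0 : 0 < σz)
    (μz : ℝ) (hμ : IsGreatest (Set.range fun j : Fin m => ∑ i, Z j i ^ 2) μz)
    (d : Fin m → ℝ) (hd : ∀ j, 0 ≤ d j)
    (ds : Fin m → ℝ) (hds : Antitone ds)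
    (hperm : ∃ σ : Equiv.Perm (Fin m), ds = d ∘ σ)
    (t : ℕ) (ht : t = Nat.floor (σz ^ 2 / μz)) (htm : t < m) :
    (spectralNorm' Z ^ 2 - t * μz ≤ μz →
      spectralNorm' (Matrix.diagonal d * Z) ^ 2 ≤
        μz * (∑ j : Fin m, if (j : ℕ) < t then ds j ^ 2 else 0) +
          (spectralNorm' Z ^ 2 - t * μz) * ds ⟨t, htm⟩ ^ 2) ∧
    (μz < spectralNorm' Z ^ 2 - t * μz →
      spectralNorm' (Matrix.diagonal d * Z) ^ 2 ≤
        μz * (∑ j : Fin m, if 1 ≤ (j : ℕ) ∧ (j : ℕ) ≤ t then ds j ^ 2 else 0) +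
          (spectralNorm' Z ^ 2 - t * μz) *
            ds ⟨0, Nat.lt_of_le_of_lt (Nat.zero_le t) htm⟩ ^ 2) :=
  norm_diag_scaled_matrix_bound_general Z μz hμ d hd ds hds hperm t htm
end

section
/- Let m ≥ n ≥ 1 be integers, and let ℓ ∈ ℝᵐ be a vector with entries satisfying 0 ≤ ℓⱼ ≤ 1 for all 1 ≤ j ≤ m and Σ_{j=1}^{m} ℓⱼ = n. Then there exists a real m×n matrix Q with orthonormal columns, QᵀQ = Iₙ, whose leverage scores equal the prescribed values: ‖eⱼᵀQ‖₂² = ℓⱼ for all 1 ≤ j ≤ m; in particular its coherence is max_{1≤j≤m} ℓⱼ. -/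
/-!
If `ℓⱼ + ℓₖ ≤ 1` for two rows `j ≠ k`, merge the two scores into one and realise the shorter
vector by induction on the number of rows; replacing the merged row `q` by the two rows `c • q`
and `d • q`, where `c² (ℓⱼ + ℓₖ) = ℓⱼ`, `d² (ℓⱼ + ℓₖ) = ℓₖ` and `c² + d² = 1`, leaves `QᵀQ`
unchanged. If `ℓⱼ + ℓₖ ≥ 1`, do this for the complementary scores `1 - ℓ` (which sum to
`m - n`) instead, and extend the columns of the resulting matrix to an orthonormal basis of `ℝᵐ`:
the `n` new columns realise `ℓ`, because the rows of an orthogonal matrix are unit vectors.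
-/

open Matrix Finset

theorem Orthonormal.exists_orthonormalBasis_sum_extension {κ κ' 𝕜 E : Type*} [Fintype κ]
    [Fintype κ'] [RCLike 𝕜] [NormedAddCommGroup E] [InnerProductSpace 𝕜 E]
    [FiniteDimensional 𝕜 E] {v : κ → E} (hv : Orthonormal 𝕜 v)
    (hcard : Fintype.card κ + Fintype.card κ' = Module.finrank 𝕜 E) :
    ∃ b : OrthonormalBasis (κ ⊕ κ') 𝕜 E, ∀ i, b (Sum.inl i) = v i := by
  have hrestrict : (Set.range Sum.inl).domRestrict (Sum.elim v 0 : κ ⊕ κ' → E) =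
      v ∘ (Equiv.ofInjective _ Sum.inl_injective).symm := by
    ext ⟨_, i, rfl⟩
    simp
  obtain ⟨b, hb⟩ := Orthonormal.exists_orthonormalBasis_extension_of_card_eq
    (by rw [Fintype.card_sum, hcard]) (hrestrict ▸ hv.comp _ (Equiv.injective _))
  exact ⟨b, fun i => hb _ ⟨i, rfl⟩⟩

namespace Matrix

variable {ι κ : Type*} [Fintype ι]

theorem orthonormal_cols_iff_transpose_mul_self_eq_one [DecidableEq κ] (Q : Matrix ι κ ℝ) :
    Orthonormal ℝ (fun i => WithLp.toLp 2 (Qᵀ i) : κ → EuclideanSpace ℝ ι) ↔ Qᵀ * Q = 1 := by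
  rw [← gram_eq_one_iff_orthonormal, gram_eq_conjTranspose_mul (EuclideanSpace.basisFun ι ℝ)]
  simp
  rfl

theorem exists_orthonormal_cols_complement {κ' : Type*} [Fintype κ] [Fintype κ']
    [DecidableEq ι] [DecidableEq κ] [DecidableEq κ'] {Q : Matrix ι κ ℝ} (hQ : Qᵀ * Q = 1)
    (hcard : Fintype.card κ + Fintype.card κ' = Fintype.card ι) :
    ∃ Q' : Matrix ι κ' ℝ, Q'ᵀ * Q' = 1 ∧ Q * Qᵀ + Q' * Q'ᵀ = 1 := by
  obtain ⟨b, hb⟩ :=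
    ((orthonormal_cols_iff_transpose_mul_self_eq_one Q).mpr hQ).exists_orthonormalBasis_sum_extension
      (κ' := κ') (by simpa using hcard)
  have hB : (EuclideanSpace.basisFun ι ℝ).toBasis.toMatrix b =
      fromCols Q (of fun j i => b (Sum.inr i) j) := by
    ext j (i | i) <;> simp [Module.Basis.toMatrix_apply, hb]
  refine ⟨of fun j i => b (Sum.inr i) j, ?_, ?_⟩
  · have := (EuclideanSpace.basisFun ι ℝ).toMatrix_orthonormalBasis_conjTranspose_mul_self b
    rw [conjTranspose_eq_transpose_of_trivial, hB, transpose_fromCols, fromRows_mul_fromCols,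
      ← fromBlocks_one] at this
    exact (fromBlocks_inj.mp this).2.2.2
  · have := (EuclideanSpace.basisFun ι ℝ).toMatrix_orthonormalBasis_self_mul_conjTranspose b
    rwa [conjTranspose_eq_transpose_of_trivial, hB, transpose_fromCols,
      fromCols_mul_fromRows] at this

theorem mul_transpose_self_apply_self {ι : Type*} [Fintype κ] (Q : Matrix ι κ ℝ) (j : ι) :
    (Q * Qᵀ) j j = ∑ i, Q j i ^ 2 := by
  simp [mul_apply, sq]

end Matrix

theorem exists_sq_add_sq_eq_one_of_nonneg {a b : ℝ} (ha : 0 ≤ a) (hb : 0 ≤ b) :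
    ∃ c d : ℝ, c ^ 2 + d ^ 2 = 1 ∧ c ^ 2 * (a + b) = a ∧ d ^ 2 * (a + b) = b := by
  rcases (add_nonneg ha hb).eq_or_lt' with hab | hab
  · exact ⟨1, 0, by norm_num, by linarith, by linarith⟩
  · refine ⟨√(a / (a + b)), √(b / (a + b)), ?_, ?_, ?_⟩ <;>
      simp only [Real.sq_sqrt (div_nonneg ha hab.le), Real.sq_sqrt (div_nonneg hb hab.le)] <;>
      field_simp

variable {ι : Type*}

def IsLeverageScores [Fintype ι] (κ : Type*) [Fintype κ] [DecidableEq κ] (ℓ : ι → ℝ) : Prop :=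
  ∃ Q : Matrix ι κ ℝ, Qᵀ * Q = 1 ∧ ∀ j, ∑ i, Q j i ^ 2 = ℓ j

section Merge

variable [DecidableEq ι] {j k : ι}

def mergeEntries (ℓ : ι → ℝ) (hjk : j ≠ k) : {x // x ≠ k} → ℝ :=
  fun y => ℓ y + (Pi.single ⟨j, hjk⟩ (ℓ k) : {x // x ≠ k} → ℝ) y

variable {ℓ : ι → ℝ} (hjk : j ≠ k)

theorem mergeEntries_apply_self : mergeEntries ℓ hjk ⟨j, hjk⟩ = ℓ j + ℓ k := by
  simp [mergeEntries]

theorem mergeEntries_apply_of_ne {y : {x // x ≠ k}} (hy : (y : ι) ≠ j) :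
    mergeEntries ℓ hjk y = ℓ y := by
  simp [mergeEntries, ← Subtype.coe_ne_coe, hy]

theorem mergeEntries_nonneg (h0 : ∀ x, 0 ≤ ℓ x) (y : {x // x ≠ k}) :
    0 ≤ mergeEntries ℓ hjk y := by
  rcases eq_or_ne (y : ι) j with hy | hy
  · rw [show y = ⟨j, hjk⟩ from Subtype.ext hy, mergeEntries_apply_self]
    exact add_nonneg (h0 j) (h0 k)
  · exact mergeEntries_apply_of_ne hjk hy ▸ h0 y

theorem mergeEntries_le_one (h1 : ∀ x, ℓ x ≤ 1) (hjk1 : ℓ j + ℓ k ≤ 1) (y : {x // x ≠ k}) :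
    mergeEntries ℓ hjk y ≤ 1 := by
  rcases eq_or_ne (y : ι) j with hy | hy
  · rwa [show y = ⟨j, hjk⟩ from Subtype.ext hy, mergeEntries_apply_self]
  · exact mergeEntries_apply_of_ne hjk hy ▸ h1 y

variable [Fintype ι]

theorem sum_mergeEntries : ∑ y, mergeEntries ℓ hjk y = ∑ x, ℓ x := by
  rw [Fintype.sum_eq_add_sum_subtype_ne ℓ k]
  simp [mergeEntries, sum_add_distrib, add_comm]

theorem IsLeverageScores.of_mergeEntries {κ : Type*} [Fintype κ] [DecidableEq κ]
    (hj : 0 ≤ ℓ j) (hk : 0 ≤ ℓ k) (h : IsLeverageScores κ (mergeEntries ℓ hjk)) :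
    IsLeverageScores κ ℓ := by
  obtain ⟨Q, hQ, hℓ⟩ := h
  obtain ⟨c, d, hcd, hc, hd⟩ := exists_sq_add_sq_eq_one_of_nonneg hj hk
  set j' : {x // x ≠ k} := ⟨j, hjk⟩
  let R : Matrix ι κ ℝ := fun x =>
    if h : x = k then d • Q j' else (if x = j then c else 1) • Q ⟨x, h⟩
  have hRk : R k = d • Q j' := dif_pos rfl
  have hRj : R j' = c • Q j' := by simp [R, hjk, j']
  have hR : ∀ y : {y : {x // x ≠ k} // y ≠ j'}, R y = Q y := fun y => by
    have hyj : (y : ι) ≠ j := fun h => y.2 (Subtype.ext h)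
    simp [R, y.1.2, hyj]
  refine ⟨R, ?_, fun x => ?_⟩
  · ext i i'
    have hQii' := congrFun (congrFun hQ i) i'
    simp only [mul_apply, transpose_apply] at hQii' ⊢
    rw [Fintype.sum_eq_add_sum_subtype_ne _ j'] at hQii'
    rw [Fintype.sum_eq_add_sum_subtype_ne _ k,
      Fintype.sum_eq_add_sum_subtype_ne (fun y : {x // x ≠ k} => R y i * R y i') j']
    simp only [hRk, hRj, hR, Pi.smul_apply, smul_eq_mul]
    linear_combination Q j' i * Q j' i' * hcd + hQii'
  · have hnorm : ∀ (a : ℝ) y, ∑ i, (a • Q y) i ^ 2 = a ^ 2 * mergeEntries ℓ hjk y := by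
      simp [mul_pow, ← mul_sum, hℓ]
    rcases eq_or_ne x k with rfl | hxk
    · rw [hRk, hnorm, mergeEntries_apply_self, hd]
    rcases eq_or_ne x j with rfl | hxj
    · rw [hRj, hnorm, mergeEntries_apply_self, hc]
    · rw [hR ⟨⟨x, hxk⟩, fun h => hxj (congrArg Subtype.val h)⟩, hℓ,
        mergeEntries_apply_of_ne hjk hxj]

end Merge

variable [Fintype ι]

theorem IsLeverageScores.one_sub {κ κ' : Type*} [Fintype κ] [DecidableEq κ] [Fintype κ']
    [DecidableEq κ'] {ℓ : ι → ℝ} (h : IsLeverageScores κ ℓ)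
    (hcard : Fintype.card κ + Fintype.card κ' = Fintype.card ι) :
    IsLeverageScores κ' (1 - ℓ) := by
  classical
  obtain ⟨Q, hQ, hℓ⟩ := h
  obtain ⟨Q', hQ', hsum⟩ := exists_orthonormal_cols_complement hQ hcard
  refine ⟨Q', hQ', fun j => ?_⟩
  have hjj := congrFun (congrFun hsum j) j
  rw [Matrix.add_apply, mul_transpose_self_apply_self, mul_transpose_self_apply_self, hℓ,
    one_apply_eq] at hjj
  simp [← hjj]

theorem isLeverageScores_zero {κ : Type*} [Fintype κ] [DecidableEq κ] [IsEmpty κ] :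
    IsLeverageScores κ (0 : ι → ℝ) :=
  ⟨0, Subsingleton.elim _ _, by simp⟩

theorem isLeverageScores_one {κ : Type*} [Fintype κ] [DecidableEq κ]
    (hcard : Fintype.card κ = Fintype.card ι) : IsLeverageScores κ (1 : ι → ℝ) := by
  simpa using (isLeverageScores_zero (κ := Fin 0) (ι := ι)).one_sub (by simpa using hcard)

theorem le_card_of_sum_eq {ℓ : ι → ℝ} {n : ℕ} (h1 : ∀ j, ℓ j ≤ 1) (hsum : ∑ j, ℓ j = n) :
    n ≤ Fintype.card ι := by
  have := Finset.sum_le_sum fun j (_ : j ∈ univ) => h1 j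
  simp only [hsum, sum_const, card_univ, nsmul_eq_mul, mul_one] at this
  exact_mod_cast this

theorem isLeverageScores_of_subsingleton [Subsingleton ι] {ℓ : ι → ℝ} {n : ℕ}
    (h0 : ∀ j, 0 ≤ ℓ j) (h1 : ∀ j, ℓ j ≤ 1) (hsum : ∑ j, ℓ j = n) :
    IsLeverageScores (Fin n) ℓ := by
  rcases Nat.eq_zero_or_pos n with rfl | hn
  · obtain rfl : ℓ = 0 := funext fun j =>
      (sum_eq_zero_iff_of_nonneg fun j _ => h0 j).1 (by simpa using hsum) j (mem_univ j)
    exact isLeverageScores_zero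
  · have hcard : n = Fintype.card ι := by
      have := Fintype.card_le_one_iff_subsingleton.2 ‹Subsingleton ι›
      have := le_card_of_sum_eq h1 hsum
      omega
    obtain rfl : ℓ = 1 := funext fun j =>
      (sum_eq_sum_iff_of_le fun j _ => h1 j).1 (by simp [hsum, hcard]) j (mem_univ j)
    exact isLeverageScores_one (by simp [hcard])

theorem isLeverageScores_of_sum_eq {ℓ : ι → ℝ} {n : ℕ} (h0 : ∀ j, 0 ≤ ℓ j) (h1 : ∀ j, ℓ j ≤ 1)
    (hsum : ∑ j, ℓ j = n) : IsLeverageScores (Fin n) ℓ := by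
  classical
  refine Fintype.induction_subsingleton_or_nontrivial (P := fun ι _ => ∀ (n : ℕ) (ℓ : ι → ℝ),
    (∀ j, 0 ≤ ℓ j) → (∀ j, ℓ j ≤ 1) → ∑ j, ℓ j = n → IsLeverageScores (Fin n) ℓ)
    ι ?_ ?_ n ℓ h0 h1 hsum
  · intro ι _ _ n ℓ h0 h1 hsum
    exact isLeverageScores_of_subsingleton h0 h1 hsum
  · intro ι _ _ IH n ℓ h0 h1 hsum
    obtain ⟨j, k, hjk⟩ := exists_pair_ne ι
    have hmerge : ∀ (n : ℕ) (ℓ : ι → ℝ), (∀ x, 0 ≤ ℓ x) → (∀ x, ℓ x ≤ 1) → ∑ x, ℓ x = n →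
        ℓ j + ℓ k ≤ 1 → IsLeverageScores (Fin n) ℓ := fun n ℓ h0 h1 hsum hjk1 =>
      IsLeverageScores.of_mergeEntries hjk (h0 j) (h0 k) <|
        IH _ (Fintype.card_subtype_lt (p := (· ≠ k)) (not_not.2 rfl)) n _
          (mergeEntries_nonneg hjk h0) (mergeEntries_le_one hjk h1 hjk1)
          ((sum_mergeEntries hjk).trans hsum)
    rcases le_total (ℓ j + ℓ k) 1 with hjk1 | hjk1
    · exact hmerge n ℓ h0 h1 hsum hjk1
    · have hn := le_card_of_sum_eq h1 hsum
      have hc := hmerge (Fintype.card ι - n) (1 - ℓ) (fun x => sub_nonneg.2 (h1 x))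
        (fun x => by simp [h0 x]) (by simp [sum_sub_distrib, hsum, Nat.cast_sub hn])
        (by simp only [Pi.sub_apply, Pi.one_apply]; linarith)
      simpa using hc.one_sub (κ' := Fin n) (by simp; omega)

theorem exists_matrix_with_prescribed_leverage_scores_general
    {m n : ℕ}
    (ℓ : Fin m → ℝ) (h0 : ∀ j, 0 ≤ ℓ j) (h1 : ∀ j, ℓ j ≤ 1)
    (hsum : ∑ j, ℓ j = (n : ℝ)) :
    ∃ Q : Matrix (Fin m) (Fin n) ℝ, Qᵀ * Q = 1 ∧ ∀ j, ∑ i, Q j i ^ 2 = ℓ j :=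
  isLeverageScores_of_sum_eq h0 h1 hsum

/-- Existence of matrices with prescribed leverage scores: given integers `m ≥ n ≥ 1` and a
vector `ℓ ∈ ℝᵐ` with `0 ≤ ℓⱼ ≤ 1` and `Σⱼ ℓⱼ = n`, there exists a real `m×n` matrix `Q` with
orthonormal columns whose leverage scores (squared row norms) are `ℓⱼ`; in particular its
coherence is `max_{1≤j≤m} ℓⱼ`. -/
theorem exists_matrix_with_prescribed_leverage_scores
    {m n : ℕ} (hn : 1 ≤ n) (hnm : n ≤ m)
    (ℓ : Fin m → ℝ) (h0 : ∀ j, 0 ≤ ℓ j) (h1 : ∀ j, ℓ j ≤ 1)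
    (hsum : ∑ j, ℓ j = (n : ℝ)) :
    ∃ Q : Matrix (Fin m) (Fin n) ℝ, Qᵀ * Q = 1 ∧ ∀ j, ∑ i, Q j i ^ 2 = ℓ j :=
  exists_matrix_with_prescribed_leverage_scores_general ℓ h0 h1 hsum
end

section
/- Let n ≥ 1 and s ≥ 2 be integers, set m = s·n, and let μ be a real number with n/m ≤ μ ≤ 1. Define φ = √((1−μ)/(m/n − 1)) and let Q be the m×n matrix obtained by stacking s diagonal blocks: the first block is √μ·Iₙ and each of the remaining s−1 blocks is φ·Iₙ. Then Q has orthonormal columns, QᵀQ = Iₙ, and its coherence equals μ: max_{1≤j≤m} ‖eⱼᵀQ‖₂² = μ. -/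
/-!
Up to the reindexing `Fin (s * n) ≃ Fin s × Fin n`, `Q` is the stack of the blocks `c a • Iₙ`
with `c = (√μ, φ, …, φ)`. Hence `QᵀQ = (∑ a, c a ^ 2) • Iₙ = (μ + (s - 1) φ²) • Iₙ = Iₙ`, and the
squared norm of a row in block `a` is `c a ^ 2`; the largest of these is `μ` because `φ² ≤ μ`
is equivalent to `μ ≥ n / m = 1 / s`.
-/

open Matrix

section StackedDiagonal

variable {ι R : Type*} (κ : Type*) [Fintype κ] [DecidableEq κ] [Semiring R]

def stackedDiagonal (c : ι → R) : Matrix (ι × κ) κ R :=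
  of fun p i => if p.2 = i then c p.1 else 0

variable {κ}

theorem transpose_stackedDiagonal_mul_self [Fintype ι] (c : ι → R) :
    (stackedDiagonal κ c)ᵀ * stackedDiagonal κ c = (∑ a, c a ^ 2) • 1 := by
  ext i i'
  rw [mul_apply, Fintype.sum_prod_type]
  rcases eq_or_ne i i' with rfl | h
  · simp [stackedDiagonal, sq]
  · simp [stackedDiagonal, h, h.symm]

theorem sum_stackedDiagonal_sq (c : ι → R) (p : ι × κ) :
    ∑ i, stackedDiagonal κ c p i ^ 2 = c p.1 ^ 2 := by
  simp [stackedDiagonal]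

theorem range_sum_sq_stackedDiagonal_submatrix {m : Type*} [Nonempty κ] (c : ι → R)
    (e : m ≃ ι × κ) :
    Set.range (fun j => ∑ i, (stackedDiagonal κ c).submatrix e id j i ^ 2) =
      Set.range fun a => c a ^ 2 := by
  simp only [submatrix_apply, id, sum_stackedDiagonal_sq]
  exact (Prod.fst_surjective.comp e.surjective).range_comp fun a => c a ^ 2

end StackedDiagonal

theorem stackedDiagonal_submatrix_finProdFinEquiv_symm_apply {R : Type*} [Semiring R] {s n : ℕ}
    (c : Fin s → R) (j : Fin (s * n)) (i : Fin n) :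
    (stackedDiagonal (Fin n) c).submatrix finProdFinEquiv.symm id j i =
      if (j : ℕ) % n = i then c j.divNat else 0 :=
  if_congr Fin.ext_iff rfl rfl

theorem Fin.divNat_eq_zero_iff {k n : ℕ} (j : Fin ((k + 1) * n)) :
    j.divNat = 0 ↔ (j : ℕ) < n := by
  rcases Nat.eq_zero_or_pos n with rfl | hn
  · exact j.elim0
  · simp [Fin.ext_iff, Fin.coe_divNat, Nat.div_eq_zero_iff, hn.ne']

theorem sq_sqrt_one_sub_div_le {μ k : ℝ} (hk : 0 < k) (hμ_lo : 1 ≤ μ * (k + 1))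
    (hμ_hi : μ ≤ 1) :
    √((1 - μ) / k) ^ 2 ≤ μ := by
  rw [Real.sq_sqrt (div_nonneg (by linarith) hk.le), div_le_iff₀ hk]
  linarith

theorem mul_sq_sqrt_one_sub_div {μ k : ℝ} (hk : 0 < k) (hμ : μ ≤ 1) :
    k * √((1 - μ) / k) ^ 2 = 1 - μ := by
  rw [Real.sq_sqrt (div_nonneg (by linarith) hk.le), mul_div_cancel₀ _ hk.ne']

/-- Stacks of diagonal matrices with prescribed coherence.  Let `m = s·n` with `s ≥ 2`,
`n/m ≤ μ ≤ 1`, and `φ = √((1−μ)/(m/n − 1))`.  The `m×n` matrix `Q` obtained by stacking `s`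
diagonal blocks — the first `√μ·Iₙ` and the remaining `s−1` blocks `φ·Iₙ` — has orthonormal
columns and coherence `μ` (its largest squared row norm equals `μ`). -/
theorem stacked_diagonal_matrix_coherence
    {n s : ℕ} (hn : 1 ≤ n) (hs : 2 ≤ s) (μ : ℝ)
    (hμ1 : (n : ℝ) / (s * n : ℕ) ≤ μ) (hμ2 : μ ≤ 1)
    (φ : ℝ) (hφ : φ = Real.sqrt ((1 - μ) / (((s * n : ℕ) : ℝ) / (n : ℝ) - 1)))
    (Q : Matrix (Fin (s * n)) (Fin n) ℝ)
    (hQdef : ∀ j i, Q j i =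
      if (j : ℕ) % n = (i : ℕ) then (if (j : ℕ) < n then Real.sqrt μ else φ) else 0) :
    Qᵀ * Q = 1 ∧
      IsGreatest (Set.range fun j : Fin (s * n) => ∑ i, Q j i ^ 2) μ := by
  obtain ⟨k, rfl⟩ : ∃ k, s = k + 1 := ⟨s - 1, by omega⟩
  have : Nonempty (Fin n) := ⟨⟨0, hn⟩⟩
  have hk : (0 : ℝ) < k := by exact_mod_cast (by omega : 0 < k)
  rw [Nat.cast_mul, div_mul_cancel_right₀ (by positivity), ← one_div,
    div_le_iff₀ (by positivity), Nat.cast_succ] at hμ1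
  rw [Nat.cast_mul, mul_div_cancel_right₀ _ (by positivity), Nat.cast_succ,
    add_sub_cancel_right] at hφ
  have hφ_le : φ ^ 2 ≤ μ := hφ ▸ sq_sqrt_one_sub_div_le hk hμ1 hμ2
  have hkφ : k * φ ^ 2 = 1 - μ := hφ ▸ mul_sq_sqrt_one_sub_div hk hμ2
  have hμ0 : 0 ≤ μ := (sq_nonneg φ).trans hφ_le
  set c : Fin (k + 1) → ℝ := fun a => if a = 0 then √μ else φ
  have hQ : Q = (stackedDiagonal (Fin n) c).submatrix finProdFinEquiv.symm id := by
    ext j i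
    rw [hQdef, stackedDiagonal_submatrix_finProdFinEquiv_symm_apply]
    simp only [c, Fin.divNat_eq_zero_iff]
  refine ⟨?_, ?_⟩
  · rw [hQ, transpose_submatrix, submatrix_mul_equiv, transpose_stackedDiagonal_mul_self,
      submatrix_id_id]
    simp [Fin.sum_univ_succ, c, Real.sq_sqrt hμ0, hkφ]
  · rw [hQ, range_sum_sq_stackedDiagonal_submatrix]
    refine ⟨⟨0, by simp [c, Real.sq_sqrt hμ0]⟩, ?_⟩
    rintro _ ⟨a, rfl⟩
    by_cases ha : a = 0 <;> simp [c, ha, Real.sq_sqrt hμ0, hφ_le]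
end
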